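/- Let v₀, …, v_n be nonzero vectors of ℝ² ⊆ ℂ² that are pairwise linearly independent (no two are proportional). Take E = ℂ² with the Klyachko filtrations of the tangent bundle: for each i ∈ {0, …, n}, E^i(j) = ℂ² for j < 0, E^i(0) = ℂ·v_i, and E^i(j) = 0 for j ≥ 1. Let t₀, …, t_n be nonnegative real weights. Then μ_t(F) ≤ μ_t(ℂ²) holds for every nonzero proper subspace F ⊊ ℂ² if and only if t_k ≤ (Σ_{i=0}^n t_i)/2 for every k ∈ {0, …, n}. -/
import Mathlib


namespace ToricParliament

/-- The `k`-th jump value `A_k(F) = max { j : dim (F ⊓ W j) ≥ l - k + 1 }` of the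
filtration of `F` induced by the decreasing family `W` of subspaces of `E`. -/
noncomputable def jumpVal {E : Type*} [AddCommGroup E] [Module ℂ E]
    (W : ℤ → Submodule ℂ E) (F : Submodule ℂ E) (l k : ℕ) : ℤ :=
  sSup { j : ℤ | l - k + 1 ≤ Module.finrank ℂ ↥(F ⊓ W j) }

/-- The lattice `L` of all intersections `⋂ i, E^i(j_i)` of pieces of the
Klyachko filtrations. -/
def filLattice {E : Type*} [AddCommGroup E] [Module ℂ E] {I : Type*}
    (Efil : I → ℤ → Submodule ℂ E) : Set (Submodule ℂ E) :=
  { V | ∃ js : I → ℤ, V = ⨅ i, Efil i (js i) }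

/-- The slope `μ_t(F) = (1/l) * ∑ i, t i * ∑_{k=1}^{l} A^i_k(F)` of a subspace `F`
with respect to the weights `t`, where `l = dim F`. -/
noncomputable def slope {E : Type*} [AddCommGroup E] [Module ℂ E]
    {I : Type*} [Fintype I]
    (Efil : I → ℤ → Submodule ℂ E) (t : I → ℝ) (F : Submodule ℂ E) : ℝ :=
  (Module.finrank ℂ ↥F : ℝ)⁻¹ *
    ∑ i : I, t i * ∑ k ∈ Finset.Icc 1 (Module.finrank ℂ ↥F),
      (jumpVal (Efil i) F (Module.finrank ℂ ↥F) k : ℝ)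

/-- The Klyachko filtrations of the tangent bundle of a smooth complete toric variety
with primitive ray generators `v i`: `E^i(j) = ℂ^d` for `j < 0`, `E^i(0) = ℂ·v_i`, and
`E^i(j) = 0` for `j ≥ 1`. -/
noncomputable def tangentFil {d n : ℕ} (v : Fin (n + 1) → (Fin d → ℝ)) :
    Fin (n + 1) → ℤ → Submodule ℂ (Fin d → ℂ) := fun i j =>
  if j < 0 then ⊤
  else if j = 0 then Submodule.span ℂ {(fun x => (v i x : ℂ) : Fin d → ℂ)}
  else ⊥

section Aux
open Module Submodule Set

variable {n : ℕ} {v : Fin (n + 1) → (Fin 2 → ℝ)}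

lemma jumpVal_eq_of_Iic {E : Type*} [AddCommGroup E] [Module ℂ E]
    {W : ℤ → Submodule ℂ E} {F : Submodule ℂ E} {l k : ℕ} {a : ℤ}
    (h : ∀ j : ℤ, (l - k + 1 ≤ finrank ℂ ↥(F ⊓ W j)) ↔ j ≤ a) :
    jumpVal W F l k = a := by
  unfold jumpVal
  rw [show {j : ℤ | l - k + 1 ≤ finrank ℂ ↥(F ⊓ W j)} = Set.Iic a from Set.ext h, csSup_Iic]

variable {n : ℕ} {v : Fin (n + 1) → (Fin 2 → ℝ)}

lemma cv_ne_zero {i : Fin (n+1)} (h : v i ≠ 0) :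
    (fun x => (v i x : ℂ) : Fin 2 → ℂ) ≠ 0 := by
  intro hc
  apply h
  funext x
  have := congrFun hc x
  simpa using this

lemma tangentFil_neg {i : Fin (n+1)} {j : ℤ} (hj : j < 0) : tangentFil v i j = ⊤ := if_pos hj

lemma tangentFil_zero {i : Fin (n+1)} :
    tangentFil v i 0 = span ℂ {(fun x => (v i x : ℂ) : Fin 2 → ℂ)} := by
  simp [tangentFil]

lemma tangentFil_pos {i : Fin (n+1)} {j : ℤ} (hj : 0 < j) : tangentFil v i j = ⊥ := by
  simp [tangentFil, hj.ne', not_lt.mpr hj.le]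

lemma line_inf_line {E : Type*} [AddCommGroup E] [Module ℂ E] [FiniteDimensional ℂ E]
    {L1 L2 : Submodule ℂ E} (h1 : finrank ℂ L1 = 1) (h2 : finrank ℂ L2 = 1)
    (hne : L1 ≠ L2) : L1 ⊓ L2 = ⊥ := by
  by_contra h
  have h0 : finrank ℂ ↥(L1 ⊓ L2) ≠ 0 := fun hz => h (Submodule.finrank_eq_zero.mp hz)
  have hle : finrank ℂ ↥(L1 ⊓ L2) ≤ 1 := h1 ▸ Submodule.finrank_mono inf_le_left
  have heq : finrank ℂ ↥(L1 ⊓ L2) = 1 := le_antisymm hle (Nat.one_le_iff_ne_zero.mpr h0)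
  have e1 : L1 ⊓ L2 = L1 := Submodule.eq_of_le_of_finrank_eq inf_le_left (heq.trans h1.symm)
  have e2 : L1 ⊓ L2 = L2 := Submodule.eq_of_le_of_finrank_eq inf_le_right (heq.trans h2.symm)
  exact hne (e1.symm.trans e2)

lemma span_injective (hv0 : ∀ i, v i ≠ 0)
    (hpair : ∀ i i', i ≠ i' → ∀ c : ℝ, v i' ≠ c • v i) {i i' : Fin (n+1)} (h : i ≠ i') :
    span ℂ {(fun x => (v i' x : ℂ) : Fin 2 → ℂ)} ≠
      span ℂ {(fun x => (v i x : ℂ) : Fin 2 → ℂ)} := by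
  intro he
  have hmem : (fun x => (v i' x : ℂ) : Fin 2 → ℂ) ∈
      span ℂ {(fun x => (v i x : ℂ) : Fin 2 → ℂ)} := he ▸ mem_span_singleton_self _
  rw [mem_span_singleton] at hmem
  obtain ⟨c, hc⟩ := hmem
  obtain ⟨x0, hx0⟩ : ∃ x, v i x ≠ 0 := by
    by_contra hall; push_neg at hall; exact hv0 i (funext hall)
  have hcx : c * (v i x0 : ℂ) = (v i' x0 : ℂ) := congrFun hc x0
  have hc0 : ((v i x0 : ℝ) : ℂ) ≠ 0 := by exact_mod_cast hx0
  have hcr : c = ((v i' x0 / v i x0 : ℝ) : ℂ) :=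
    ((eq_div_iff hc0).mpr hcx).trans (Complex.ofReal_div _ _).symm
  apply hpair i i' h (v i' x0 / v i x0)
  funext x
  have hx : c * (v i x : ℂ) = (v i' x : ℂ) := congrFun hc x
  rw [hcr] at hx
  have hreal : v i' x0 / v i x0 * v i x = v i' x := by exact_mod_cast hx
  simpa [Pi.smul_apply, smul_eq_mul] using hreal.symm

lemma jump_top_one (i : Fin (n+1)) (hv0 : ∀ i, v i ≠ 0) :
    jumpVal (tangentFil v i) (⊤ : Submodule ℂ (Fin 2 → ℂ)) 2 1 = -1 := by
  apply jumpVal_eq_of_Iic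
  intro j
  constructor
  · intro hle
    replace hle : 2 ≤ finrank ℂ ↥((⊤ : Submodule ℂ (Fin 2 → ℂ)) ⊓ tangentFil v i j) := by omega
    by_contra hj
    push_neg at hj
    rcases eq_or_lt_of_le (by linarith : (0:ℤ) ≤ j) with h0 | h0
    · rw [← h0, top_inf_eq, tangentFil_zero, finrank_span_singleton (cv_ne_zero (hv0 i))] at hle
      norm_num at hle
    · rw [tangentFil_pos h0, inf_bot_eq, finrank_bot] at hle
      norm_num at hle
  · intro hj
    rw [tangentFil_neg (by linarith : j < 0), top_inf_eq, finrank_top, finrank_fin_fun]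

lemma jump_top_two (i : Fin (n+1)) (hv0 : ∀ i, v i ≠ 0) :
    jumpVal (tangentFil v i) (⊤ : Submodule ℂ (Fin 2 → ℂ)) 2 2 = 0 := by
  apply jumpVal_eq_of_Iic
  intro j
  constructor
  · intro hle
    replace hle : 1 ≤ finrank ℂ ↥((⊤ : Submodule ℂ (Fin 2 → ℂ)) ⊓ tangentFil v i j) := by omega
    by_contra hj
    push_neg at hj
    rw [tangentFil_pos hj, inf_bot_eq, finrank_bot] at hle
    norm_num at hle
  · intro hj
    show 2 - 2 + 1 ≤ _
    rcases eq_or_lt_of_le hj with h0 | h0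
    · rw [h0, top_inf_eq, tangentFil_zero, finrank_span_singleton (cv_ne_zero (hv0 i))]
    · rw [tangentFil_neg h0, top_inf_eq, finrank_top, finrank_fin_fun]
      norm_num

open Classical in
lemma jump_line (i : Fin (n+1)) (hv0 : ∀ i, v i ≠ 0) {F : Submodule ℂ (Fin 2 → ℂ)}
    (hF : finrank ℂ F = 1) :
    jumpVal (tangentFil v i) F 1 1 =
      if F = span ℂ {(fun x => (v i x : ℂ) : Fin 2 → ℂ)} then 0 else -1 := by
  have hsp : finrank ℂ ↥(span ℂ {(fun x => (v i x : ℂ) : Fin 2 → ℂ)}) = 1 :=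
    finrank_span_singleton (cv_ne_zero (hv0 i))
  split_ifs with hFe
  · apply jumpVal_eq_of_Iic
    intro j
    constructor
    · intro hle
      replace hle : 1 ≤ finrank ℂ ↥(F ⊓ tangentFil v i j) := by omega
      by_contra hj
      push_neg at hj
      rw [tangentFil_pos hj, inf_bot_eq, finrank_bot] at hle
      norm_num at hle
    · intro hj
      show 1 - 1 + 1 ≤ _
      rcases eq_or_lt_of_le hj with h0 | h0
      · rw [h0, tangentFil_zero, ← hFe, inf_idem, hF]
      · rw [tangentFil_neg h0, inf_top_eq, hF]
  · apply jumpVal_eq_of_Iic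
    intro j
    constructor
    · intro hle
      replace hle : 1 ≤ finrank ℂ ↥(F ⊓ tangentFil v i j) := by omega
      by_contra hj
      push_neg at hj
      rcases eq_or_lt_of_le (by linarith : (0:ℤ) ≤ j) with h0 | h0
      · rw [← h0, tangentFil_zero, line_inf_line hF hsp hFe, finrank_bot] at hle
        norm_num at hle
      · rw [tangentFil_pos h0, inf_bot_eq, finrank_bot] at hle
        norm_num at hle
    · intro hj
      show 1 - 1 + 1 ≤ _
      rw [tangentFil_neg (by linarith : j < 0), inf_top_eq, hF]


lemma slope_top (t : Fin (n+1) → ℝ) (hv0 : ∀ i, v i ≠ 0) :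
    slope (tangentFil v) t (⊤ : Submodule ℂ (Fin 2 → ℂ)) = -(∑ i, t i) / 2 := by
  have hrk : finrank ℂ (⊤ : Submodule ℂ (Fin 2 → ℂ)) = 2 := by
    rw [finrank_top, finrank_fin_fun]
  have hIcc : (Finset.Icc 1 2 : Finset ℕ) = {1, 2} := by decide
  simp only [slope, hrk, hIcc, Finset.sum_pair (by norm_num : (1:ℕ) ≠ 2),
    jump_top_one _ hv0, jump_top_two _ hv0]
  push_cast
  rw [Finset.sum_congr rfl (fun i _ => by ring : ∀ i ∈ Finset.univ, t i * ((-1:ℝ) + 0) = -(t i)),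
    Finset.sum_neg_distrib]
  ring

open Classical in
lemma slope_line (t : Fin (n+1) → ℝ) (hv0 : ∀ i, v i ≠ 0) {F : Submodule ℂ (Fin 2 → ℂ)}
    (hF : finrank ℂ F = 1) :
    slope (tangentFil v) t F =
      ∑ i, t i * (if F = span ℂ {(fun x => (v i x : ℂ) : Fin 2 → ℂ)} then (0:ℝ) else -1) := by
  simp only [slope, hF, Finset.Icc_self, Finset.sum_singleton]
  rw [show ((1:ℕ):ℝ) = 1 by norm_num, inv_one, one_mul]
  refine Finset.sum_congr rfl fun i _ => ?_
  rw [jump_line i hv0 hF]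
  split_ifs <;> norm_num

open Classical in
lemma sum_eq_of_eq (t : Fin (n+1) → ℝ) (hv0 : ∀ i, v i ≠ 0)
    (hpair : ∀ i i', i ≠ i' → ∀ c : ℝ, v i' ≠ c • v i)
    {F : Submodule ℂ (Fin 2 → ℂ)} {k : Fin (n+1)}
    (hk : F = span ℂ {(fun x => (v k x : ℂ) : Fin 2 → ℂ)}) :
    ∑ i, t i * (if F = span ℂ {(fun x => (v i x : ℂ) : Fin 2 → ℂ)} then (0:ℝ) else -1)
      = t k - ∑ i, t i := by
  have hcong : ∀ i ∈ Finset.univ,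
      t i * (if F = span ℂ {(fun x => (v i x : ℂ) : Fin 2 → ℂ)} then (0:ℝ) else -1)
        = -(t i) + (if i = k then t i else 0) := by
    intro i _
    by_cases hik : i = k
    · subst hik
      rw [if_pos hk, if_pos rfl]
      ring
    · rw [if_neg (by rw [hk]; exact span_injective hv0 hpair hik), if_neg hik]
      ring
  rw [Finset.sum_congr rfl hcong, Finset.sum_add_distrib, Finset.sum_neg_distrib,
    Finset.sum_ite_eq' Finset.univ k t, if_pos (Finset.mem_univ k)]
  ring

open Classical in
lemma sum_eq_of_ne (t : Fin (n+1) → ℝ) {F : Submodule ℂ (Fin 2 → ℂ)}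
    (hnone : ∀ i, F ≠ span ℂ {(fun x => (v i x : ℂ) : Fin 2 → ℂ)}) :
    ∑ i, t i * (if F = span ℂ {(fun x => (v i x : ℂ) : Fin 2 → ℂ)} then (0:ℝ) else -1)
      = -∑ i, t i := by
  rw [Finset.sum_congr rfl fun i _ =>
      (by rw [if_neg (hnone i), mul_neg_one] :
        t i * (if F = span ℂ {(fun x => (v i x : ℂ) : Fin 2 → ℂ)} then (0:ℝ) else -1) = -t i),
    Finset.sum_neg_distrib]


end Aux

open Module Submodule in
/-- surface case of the Corollary: let `v₀, …, v_n` be nonzero, pairwise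
non-proportional vectors of `ℝ² ⊆ ℂ²`, with the Klyachko filtrations of the tangent
bundle, and let `t` be nonnegative weights. Then `μ_t(F) ≤ μ_t(ℂ²)` holds for every
nonzero proper subspace `F ⊊ ℂ²` if and only if `t k ≤ (∑ i, t i) / 2` for every `k`. -/
theorem tangent_surface_semistable_iff (n : ℕ)
    (v : Fin (n + 1) → (Fin 2 → ℝ))
    (hv0 : ∀ i, v i ≠ 0)
    (hpair : ∀ i i', i ≠ i' → ∀ c : ℝ, v i' ≠ c • v i)
    (t : Fin (n + 1) → ℝ) (ht : ∀ i, 0 ≤ t i) :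
    (∀ F : Submodule ℂ (Fin 2 → ℂ), F ≠ ⊥ → F ≠ ⊤ →
        slope (tangentFil v) t F ≤ slope (tangentFil v) t ⊤) ↔
      ∀ k : Fin (n + 1), t k ≤ (∑ i, t i) / 2 := by
  classical
  have hS : (0:ℝ) ≤ ∑ i, t i := Finset.sum_nonneg fun i _ => ht i
  constructor
  · intro h k
    set L : Submodule ℂ (Fin 2 → ℂ) := span ℂ {(fun x => (v k x : ℂ) : Fin 2 → ℂ)} with hL
    have hL1 : finrank ℂ L = 1 := finrank_span_singleton (cv_ne_zero (hv0 k))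
    have hbot : L ≠ ⊥ := by
      rw [hL, Ne, Submodule.span_singleton_eq_bot]
      exact cv_ne_zero (hv0 k)
    have htop : L ≠ ⊤ := fun he => by
      rw [he, finrank_top, finrank_fin_fun] at hL1; norm_num at hL1
    have := h L hbot htop
    rw [slope_top t hv0, slope_line t hv0 hL1, sum_eq_of_eq t hv0 hpair hL] at this
    linarith
  · intro h F hbot htop
    have hF : finrank ℂ F = 1 := by
      have hle : finrank ℂ F ≤ 2 := by
        simpa [finrank_fin_fun] using Submodule.finrank_le F
      have h0 : finrank ℂ F ≠ 0 := fun hz => hbot (Submodule.finrank_eq_zero.mp hz)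
      have h2 : finrank ℂ F ≠ 2 := fun h2 => htop
        (Submodule.eq_of_le_of_finrank_eq le_top (by rw [h2, finrank_top, finrank_fin_fun]))
      omega
    rw [slope_top t hv0, slope_line t hv0 hF]
    by_cases hex : ∃ k, F = span ℂ {(fun x => (v k x : ℂ) : Fin 2 → ℂ)}
    · obtain ⟨k, hk⟩ := hex
      rw [sum_eq_of_eq t hv0 hpair hk]
      have := h k
      linarith
    · push_neg at hex
      rw [sum_eq_of_ne t hex]
      linarith


end ToricParliament
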